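/- Fix integers 1 ≤ r ≤ n and a real c > 0, and set δ = 2^{n-1} − c·√(2^{n-1}·binom(n,r)·ln 2). If g : F_2^n → F_2 satisfies |2^{n-1} − wt(g)| ≤ 2^{n-1}/binom(n,r), then P(B_δ(0) ∩ B_δ(g)) ≤ 2^{−2c²·(binom(n,r) − 1)}, where P(B_δ(0) ∩ B_δ(g)) = #{f : wt(f) ≤ δ and d(f,g) ≤ δ} / 2^{2^n}. -/
import Mathlib


/-- Boolean functions on `𝔽₂ⁿ`, identified with binary words of length `2^n`. -/
abbrev BF (n : ℕ) := (Fin n → ZMod 2) → ZMod 2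

/-- The uniform probability of a set of Boolean functions: `P(A) = #A / 2^{2^n}`. -/
noncomputable def Pr (n : ℕ) (S : Set (BF n)) : ℝ :=
  (Nat.card S : ℝ) / 2 ^ (2 ^ n)

/-- `B_δ(g)`, the Hamming ball of centre `g` and radius `δ`. -/
def ball (n : ℕ) (g : BF n) (δ : ℝ) : Set (BF n) :=
  {f | (hammingDist f g : ℝ) ≤ δ}

/-- `δ = 2^{n-1} − c·√(2^{n-1}·binom(n,r)·ln 2)`. -/
noncomputable def rmδ (r : ℕ) (c : ℝ) (n : ℕ) : ℝ :=
  2 ^ (n - 1) - c * Real.sqrt (2 ^ (n - 1) * (n.choose r) * Real.log 2)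

open Finset Real

lemma countA {ι : Type*} [Fintype ι] [DecidableEq ι] (f g : ι → ZMod 2) :
    hammingNorm f + hammingDist f g
      = hammingNorm g + 2 * #{x : ι | g x = 0 ∧ f x ≠ 0} := by
  unfold hammingNorm hammingDist
  simp only [Finset.card_filter]
  rw [← Finset.sum_add_distrib, Finset.mul_sum, ← Finset.sum_add_distrib]
  apply Finset.sum_congr rfl
  intro x _
  have : ∀ a b : ZMod 2, ((if a ≠ 0 then 1 else 0) + (if a ≠ b then 1 else 0) : ℕ)
      = (if b ≠ 0 then 1 else 0) + 2 * (if b = 0 ∧ a ≠ 0 then 1 else 0) := by decide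
  exact this (f x) (g x)

lemma hammingNorm_le_card {ι : Type*} [Fintype ι] [DecidableEq ι] (g : ι → ZMod 2) :
    hammingNorm g ≤ Fintype.card ι :=
  (Finset.card_filter_le _ _).trans (le_of_eq (Finset.card_univ))

lemma chernoff {ι : Type*} [Fintype ι] [DecidableEq ι] (g : ι → ZMod 2) (t lam : ℝ)
    (hlam : 0 ≤ lam) :
    (∑ f : ι → ZMod 2, if ((#{x : ι | g x = 0 ∧ f x ≠ 0} : ℕ) : ℝ) ≤ t then (1:ℝ) else 0)
      ≤ Real.exp (lam * t) * ((1 + Real.exp (-lam)) ^ (Fintype.card ι - hammingNorm g)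
          * 2 ^ (hammingNorm g)) := by
  have hnorm : #{x : ι | ¬ (g x = 0)} = hammingNorm g := rfl
  have hsplit : #{x : ι | g x = 0} + #{x : ι | ¬ (g x = 0)} = Fintype.card ι := by
    rw [Finset.card_filter_add_card_filter_not, Finset.card_univ]
  have hm : #{x : ι | g x = 0} = Fintype.card ι - hammingNorm g := by omega
  have step1 : ∀ f : ι → ZMod 2,
      (if ((#{x : ι | g x = 0 ∧ f x ≠ 0} : ℕ) : ℝ) ≤ t then (1:ℝ) else 0)
        ≤ Real.exp (lam * t) * ∏ x : ι, (if g x = 0 ∧ f x ≠ 0 then Real.exp (-lam) else 1) := by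
    intro f
    have hb : (∏ x : ι, (if g x = 0 ∧ f x ≠ 0 then Real.exp (-lam) else 1))
        = Real.exp (-lam * ((#{x : ι | g x = 0 ∧ f x ≠ 0} : ℕ) : ℝ)) := by
      rw [Finset.card_filter, Nat.cast_sum, Finset.mul_sum, Real.exp_sum]
      apply Finset.prod_congr rfl
      intro x _
      by_cases h : g x = 0 ∧ f x ≠ 0 <;> simp [h]
    rw [hb, ← Real.exp_add]
    split_ifs with h
    · rw [Real.one_le_exp_iff]
      nlinarith [Finset.card_filter_le (univ : Finset ι) (fun x => g x = 0 ∧ f x ≠ 0)]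
    · positivity
  calc _ ≤ ∑ f : ι → ZMod 2, Real.exp (lam * t)
        * ∏ x : ι, (if g x = 0 ∧ f x ≠ 0 then Real.exp (-lam) else 1) :=
          Finset.sum_le_sum fun f _ => step1 f
    _ = Real.exp (lam * t) * ∑ f : ι → ZMod 2,
          ∏ x : ι, (if g x = 0 ∧ f x ≠ 0 then Real.exp (-lam) else 1) := by
          rw [Finset.mul_sum]
    _ = Real.exp (lam * t) * ∏ x : ι, ∑ v : ZMod 2,
          (if g x = 0 ∧ v ≠ 0 then Real.exp (-lam) else 1) := by
          rw [Finset.prod_univ_sum, Fintype.piFinset_univ]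
    _ = Real.exp (lam * t) * ∏ x : ι, (if g x = 0 then 1 + Real.exp (-lam) else 2) := by
          congr 1
          apply Finset.prod_congr rfl
          intro x _
          have huniv : (Finset.univ : Finset (ZMod 2)) = {0, 1} := by decide
          rw [huniv]
          by_cases h : g x = 0 <;> simp [h]
    _ = Real.exp (lam * t) * ((1 + Real.exp (-lam)) ^ (Fintype.card ι - hammingNorm g)
          * 2 ^ (hammingNorm g)) := by
          congr 1
          rw [← Finset.prod_filter_mul_prod_filter_not univ (fun x => g x = 0)]
          rw [Finset.prod_ite_of_true, Finset.prod_ite_of_false, Finset.prod_const,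
            Finset.prod_const, hm, hnorm]
          · intro x hx; exact (Finset.mem_filter.mp hx).2
          · intro x hx; exact (Finset.mem_filter.mp hx).2


set_option maxHeartbeats 1000000 in
theorem stmt4 (n r : ℕ) (hr : 1 ≤ r) (hrn : r ≤ n) (c : ℝ) (hc : 0 < c) (g : BF n)
    (hg : |2 ^ (n - 1) - (hammingNorm g : ℝ)| ≤ 2 ^ (n - 1) / (n.choose r : ℝ)) :
    Pr n (ball n 0 (rmδ r c n) ∩ ball n g (rmδ r c n)) ≤
      (2 : ℝ) ^ (-(2 * c ^ 2 * ((n.choose r : ℝ) - 1))) := by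
  classical
  have hn : 1 ≤ n := hr.trans hrn
  set K : ℕ := n.choose r with hKdef
  have hK1 : 1 ≤ K := Nat.choose_pos hrn
  set S : Set (BF n) := ball n 0 (rmδ r c n) ∩ ball n g (rmδ r c n) with hS
  clear_value S
  have hQpos : (0:ℝ) < 2 ^ (2 ^ n) := by positivity
  have hScard : Nat.card S ≤ 2 ^ (2 ^ n) := by
    have h1 : Nat.card S ≤ Nat.card (BF n) := by
      rw [Nat.card_coe_set_eq]
      calc S.ncard ≤ (Set.univ : Set (BF n)).ncard :=
            Set.ncard_le_ncard (Set.subset_univ S) Set.finite_univ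
        _ = Nat.card (BF n) := by rw [Set.ncard_univ]
    calc Nat.card S ≤ Nat.card (BF n) := h1
      _ = 2 ^ (2 ^ n) := by
          rw [Nat.card_eq_fintype_card]; simp [Fintype.card_fun]
  rcases eq_or_lt_of_le hK1 with hK1' | hK2
  · have hz : ((K:ℝ) - 1) = 0 := by rw [← hK1']; norm_num
    rw [show (n.choose r : ℝ) = (K:ℝ) from rfl, hz]
    simp only [mul_zero, neg_zero, Real.rpow_zero]
    rw [Pr, div_le_one hQpos]
    exact_mod_cast hScard
  have hK2' : (2:ℝ) ≤ (K:ℝ) := by exact_mod_cast hK2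
  have hK0 : (0:ℝ) < (K:ℝ) := by linarith
  set H : ℝ := 2 ^ (n - 1) with hHdef
  have hH : (0:ℝ) < H := by positivity
  have hlog : (0:ℝ) < Real.log 2 := Real.log_pos one_lt_two
  set w : ℕ := hammingNorm g with hwdef
  set W : ℝ := (w : ℝ) with hWdef
  have hWbd : H - H / K ≤ W ∧ W ≤ H + H / K := by
    have h := abs_le.mp hg
    constructor <;> linarith [h.1, h.2]
  have h2n : ((2:ℝ)) ^ n = 2 * H := by
    rw [hHdef, ← pow_succ']
    congr 1
    omega
  set s : ℝ := c * Real.sqrt (H * K * Real.log 2) with hsdef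
  have hs0 : 0 ≤ s := by positivity
  have hs2 : s ^ 2 = c ^ 2 * (H * K * Real.log 2) := by
    rw [hsdef, mul_pow, Real.sq_sqrt (by positivity)]
  have hδ : rmδ r c n = H - s := by
    rw [hsdef, hKdef, hHdef, rmδ]
  have hwle : w ≤ 2 ^ n := by
    have h1 := hammingNorm_le_card g
    have h2 : Fintype.card (Fin n → ZMod 2) = 2 ^ n := by simp [Fintype.card_fun]
    omega
  set m : ℕ := 2 ^ n - w with hmdef
  have hmw : m + w = 2 ^ n := by omega
  set M : ℝ := (m : ℝ) with hMdef
  have hMW : M = 2 * H - W := by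
    have h1 : (m : ℝ) + W = (2:ℝ) ^ n := by
      rw [hWdef, show ((2:ℝ)) ^ n = ((2 ^ n : ℕ) : ℝ) by push_cast; ring]
      exact_mod_cast hmw
    rw [hMdef]; linarith [h1, h2n]
  have hHK : H / K ≤ H / 2 := div_le_div_of_nonneg_left hH.le (by norm_num) hK2'
  have hMpos : 0 < M := by rw [hMW]; linarith [hWbd.2, hHK]
  have hdivK : H / K * K = H := div_mul_cancel₀ H (ne_of_gt hK0)
  have hMup : M * K ≤ H * (K + 1) := by
    have hMle : M ≤ H + H / K := by rw [hMW]; linarith [hWbd.1]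
    have h1 : M * K ≤ (H + H / K) * K := mul_le_mul_of_nonneg_right hMle hK0.le
    have h2 : (H + H / K) * K = H * K + H := by rw [add_mul, hdivK]
    linarith
  set lam : ℝ := 4 * s / M with hlamdef
  have hlam0 : 0 ≤ lam := by positivity
  set t : ℝ := (H - s) - W / 2 with htdef
  -- Step A
  have hsubset : S.toFinset ⊆
      Finset.univ.filter
        (fun f : BF n => ((#{x : Fin n → ZMod 2 | g x = 0 ∧ f x ≠ 0} : ℕ) : ℝ) ≤ t) := by
    intro f hf
    rw [Set.mem_toFinset, hS] at hf
    obtain ⟨h1, h2⟩ := hf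
    have h1' : (hammingNorm f : ℝ) ≤ H - s := by
      have h := h1
      rw [ball, Set.mem_setOf_eq, hammingDist_zero_right, hδ] at h
      exact h
    have h2' : (hammingDist f g : ℝ) ≤ H - s := by
      have h := h2
      rw [ball, Set.mem_setOf_eq, hδ] at h
      exact h
    have hcnt := congrArg (Nat.cast (R := ℝ)) (countA f g)
    push_cast at hcnt
    rw [Finset.mem_filter]
    refine ⟨Finset.mem_univ _, ?_⟩
    rw [htdef, ← hwdef, ← hWdef] at *
    linarith [hcnt, h1', h2']
  have hcardS : (Nat.card S : ℝ) ≤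
      ∑ f : BF n, if ((#{x : Fin n → ZMod 2 | g x = 0 ∧ f x ≠ 0} : ℕ) : ℝ) ≤ t
        then (1:ℝ) else 0 := by
    have h1 : Nat.card S = S.toFinset.card := by
      rw [Nat.card_coe_set_eq, Set.ncard_eq_toFinset_card']
    have h2 := Finset.card_le_card hsubset
    rw [h1]
    calc (S.toFinset.card : ℝ)
        ≤ (((Finset.univ.filter
            (fun f : BF n => ((#{x : Fin n → ZMod 2 | g x = 0 ∧ f x ≠ 0} : ℕ) : ℝ) ≤ t)).card
            : ℕ) : ℝ) := by exact_mod_cast h2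
      _ = _ := by rw [Finset.card_filter]; push_cast; rfl
  have hcher := chernoff g t lam hlam0
  rw [show Fintype.card (Fin n → ZMod 2) = 2 ^ n by simp [Fintype.card_fun],
    ← hwdef, ← hmdef] at hcher
  -- Step C
  have hcosh : 1 + Real.exp (-lam) ≤ 2 * Real.exp (lam ^ 2 / 8 - lam / 2) := by
    have h1 : 1 + Real.exp (-lam)
        = 2 * Real.exp (-lam/2) * Real.cosh (lam/2) := by
      rw [Real.cosh_eq]
      rw [show 2 * Real.exp (-lam/2) * ((Real.exp (lam/2) + Real.exp (-(lam/2))) / 2)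
          = Real.exp (-lam/2) * Real.exp (lam/2) + Real.exp (-lam/2) * Real.exp (-(lam/2)) by ring]
      rw [← Real.exp_add, ← Real.exp_add]
      rw [show -lam/2 + lam/2 = 0 by ring, show -lam/2 + -(lam/2) = -lam by ring, Real.exp_zero]
    rw [h1]
    have h2 : Real.cosh (lam/2) ≤ Real.exp ((lam/2)^2/2) := Real.cosh_le_exp_half_sq _
    calc 2 * Real.exp (-lam/2) * Real.cosh (lam/2)
        ≤ 2 * Real.exp (-lam/2) * Real.exp ((lam/2)^2/2) :=
          mul_le_mul_of_nonneg_left h2 (by positivity)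
      _ = 2 * Real.exp (lam ^ 2 / 8 - lam / 2) := by
          rw [mul_assoc, ← Real.exp_add]; ring_nf
  have hpowbd : ((1 + Real.exp (-lam)) ^ m : ℝ)
      ≤ 2 ^ m * Real.exp (M * (lam ^ 2 / 8 - lam / 2)) := by
    calc ((1 + Real.exp (-lam)) ^ m : ℝ)
        ≤ (2 * Real.exp (lam ^ 2 / 8 - lam / 2)) ^ m :=
          pow_le_pow_left₀ (by positivity) hcosh m
      _ = 2 ^ m * Real.exp (lam ^ 2 / 8 - lam / 2) ^ m := mul_pow _ _ _
      _ = 2 ^ m * Real.exp (M * (lam ^ 2 / 8 - lam / 2)) := by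
          rw [← Real.exp_nat_mul, hMdef]
  have hpow2 : (2:ℝ) ^ m * 2 ^ w = 2 ^ (2 ^ n) := by rw [← pow_add, hmw]
  have hexpo : lam * t + M * (lam ^ 2 / 8 - lam / 2) = -2 * s ^ 2 / M := by
    have ht' : t = M / 2 - s := by rw [htdef, hMW]; ring
    have hM0 : M ≠ 0 := ne_of_gt hMpos
    rw [ht', hlamdef]
    field_simp
    ring
  have hfinal1 : Real.exp (lam * t) * ((1 + Real.exp (-lam)) ^ m * 2 ^ w)
      ≤ Real.exp (-2 * s ^ 2 / M) * 2 ^ (2 ^ n) := by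
    calc Real.exp (lam * t) * ((1 + Real.exp (-lam)) ^ m * 2 ^ w)
        ≤ Real.exp (lam * t) * ((2 ^ m * Real.exp (M * (lam ^ 2 / 8 - lam / 2))) * 2 ^ w) := by
          apply mul_le_mul_of_nonneg_left _ (Real.exp_nonneg _)
          exact mul_le_mul_of_nonneg_right hpowbd (by positivity)
      _ = Real.exp (lam * t + M * (lam ^ 2 / 8 - lam / 2)) * (2 ^ m * 2 ^ w) := by
          rw [Real.exp_add]; ring
      _ = Real.exp (-2 * s ^ 2 / M) * 2 ^ (2 ^ n) := by rw [hpow2, hexpo]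
  have hfinal2 : Real.exp (-2 * s ^ 2 / M) ≤ (2:ℝ) ^ (-(2 * c ^ 2 * ((K : ℝ) - 1))) := by
    rw [Real.rpow_def_of_pos (by norm_num : (0:ℝ) < 2), Real.exp_le_exp, div_le_iff₀ hMpos]
    have key : 2 * c ^ 2 * ((K:ℝ) - 1) * Real.log 2 * M ≤ 2 * s ^ 2 := by
      rw [hs2]
      have h1 : ((K:ℝ) - 1) * (M * K) ≤ ((K:ℝ) - 1) * (H * (K + 1)) :=
        mul_le_mul_of_nonneg_left hMup (by linarith)
      have h2 : ((K:ℝ) - 1) * (H * (K + 1)) ≤ H * K ^ 2 := by nlinarith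
      have h4 : ((K:ℝ) - 1) * M ≤ H * K := by nlinarith
      nlinarith [mul_le_mul_of_nonneg_left h4
        (show (0:ℝ) ≤ 2 * c ^ 2 * Real.log 2 by positivity)]
    nlinarith [key]
  rw [show (n.choose r : ℝ) = (K:ℝ) from rfl]
  rw [Pr, div_le_iff₀ hQpos]
  calc (Nat.card S : ℝ)
      ≤ ∑ f : BF n, if ((#{x : Fin n → ZMod 2 | g x = 0 ∧ f x ≠ 0} : ℕ) : ℝ) ≤ t
          then (1:ℝ) else 0 := hcardS
    _ ≤ Real.exp (lam * t) * ((1 + Real.exp (-lam)) ^ m * 2 ^ w) := hcher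
    _ ≤ Real.exp (-2 * s ^ 2 / M) * 2 ^ (2 ^ n) := hfinal1
    _ ≤ (2:ℝ) ^ (-(2 * c ^ 2 * ((K : ℝ) - 1))) * 2 ^ (2 ^ n) :=
        mul_le_mul_of_nonneg_right hfinal2 (by positivity)
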